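/- arXiv:2603.29600 — 2 statements merged into one kernel-verified Lean document; each statement's English description precedes it below -/
import Mathlib

section
/- Let d ≥ 2, b := 2^d, let (x_n) be the dyadic digital sequence on Q = [0,1]^d, let N > b^2, L := min{ℓ ≥ 0 : b^ℓ ≥ N} (so L ≥ 3), and let 0 ≤ ℓ ≤ L−3. Fix u ∈ {0,…,b−1}^ℓ with dyadic cube C_u = ∏_{j=1}^d [A_j, A_j + 2^{−ℓ}) and a half-open rectangle R_u = ∏_{j=1}^d [a_j, b_j) satisfying λ_d(R_u) = M(u)/N and |a_j − A_j| ≤ S_ℓ, |b_j − (A_j + 2^{−ℓ})| ≤ S_ℓ for all 1 ≤ j ≤ d. Then there exist half-open rectangles R_{u∗0}, …, R_{u∗(b−1)} such that: (i) they are pairwise disjoint and their union equals R_u up to a Lebesgue-null set; (ii) λ_d(R_{u∗v}) = M(u∗v)/N for every v ∈ {0,…,b−1}; and (iii) writing C_{u∗v} = ∏_{j=1}^d [A_{u∗v,j}, A_{u∗v,j} + 2^{−(ℓ+1)}) and R_{u∗v} = ∏_{j=1}^d [a_{u∗v,j}, b_{u∗v,j}), one has |a_{u∗v,j} − A_{u∗v,j}|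 ≤ S_{ℓ+1} and |b_{u∗v,j} − (A_{u∗v,j} + 2^{−(ℓ+1)})| ≤ S_{ℓ+1} for all 1 ≤ j ≤ d. -/
open MeasureTheory
open scoped ENNReal

/-- The dyadic digital sequence in `[0,1]^d` (indexed so that `digitalPoint d n` is `x_n`
for `n ≥ 1`): the `j`-th coordinate of `x_n` is `∑_{k≥0} ε_j(a_k(n-1)) 2^{-(k+1)}`, where
`a_k(m)` is the `k`-th base-`2^d` digit of `m` and `ε_j(a)` is the `j`-th binary digit of `a`. -/
noncomputable def digitalPoint (d n : ℕ) : EuclideanSpace ℝ (Fin d) :=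
  WithLp.toLp 2 fun (j : Fin d) => ∑' k : ℕ, ((Nat.testBit ((n - 1) / (2 ^ d) ^ k % 2 ^ d) j.val).toNat : ℝ) / 2 ^ (k + 1)

/-- The `j`-th coordinate of the lower-left corner of the level-`ℓ` dyadic cube `C_u`
associated with the word `u = (u 0, …, u (ℓ-1))`:  `∑_{k<ℓ} ε_j(u_k) 2^{-(k+1)}`. -/
noncomputable def cubeCorner (d ℓ : ℕ) (u : ℕ → ℕ) (j : Fin d) : ℝ :=
  ∑ k ∈ Finset.range ℓ, ((Nat.testBit (u k) j.val).toNat : ℝ) / 2 ^ (k + 1)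

/-- The level-`ℓ` dyadic cube `C_u = ∏_j [corner_j, corner_j + 2^{-ℓ})`. -/
noncomputable def dyadicCube (d ℓ : ℕ) (u : ℕ → ℕ) : Set (EuclideanSpace ℝ (Fin d)) :=
  {x | ∀ j, x j ∈ Set.Ico (cubeCorner d ℓ u j) (cubeCorner d ℓ u j + ((2:ℝ) ^ ℓ)⁻¹)}

/-- The prefix count `M(u) = #{1 ≤ n ≤ N : x_n ∈ C_u}`. -/
noncomputable def prefixCount (d N ℓ : ℕ) (u : ℕ → ℕ) : ℕ :=
  {n : ℕ | 1 ≤ n ∧ n ≤ N ∧ digitalPoint d n ∈ dyadicCube d ℓ u}.ncard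

/-- The accumulated drift `S_ℓ = ∑_{r<ℓ} 2^{2d-3} · 2^{r(d-1)} / N` (so `S_0 = 0`). -/
noncomputable def driftS (d N ℓ : ℕ) : ℝ :=
  ∑ r ∈ Finset.range ℓ, 2 ^ (2 * d - 3) * 2 ^ (r * (d - 1)) / N

/-- The half-open axis-parallel rectangle `∏_j [a_j, b_j) ⊆ [0,1]^d`. -/
def rect (d : ℕ) (a b : Fin d → ℝ) : Set (EuclideanSpace ℝ (Fin d)) :=
  {x | ∀ j, x j ∈ Set.Ico (a j) (b j)}

/-- The word `u ∗ v`: the length-`ℓ` word `u` concatenated with the digit `v`. -/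
def extendWord (ℓ : ℕ) (u : ℕ → ℕ) (v : ℕ) : ℕ → ℕ :=
  fun k => if k < ℓ then u k else v

/-! ### Auxiliary lemmas -/

theorem volume_rect (d : ℕ) (a b : Fin d → ℝ) :
    volume (rect d a b) = ∏ j, ENNReal.ofReal (b j - a j) := by
  have h := (EuclideanSpace.volume_preserving_symm_measurableEquiv_toLp (Fin d)).measure_preimage
    (s := Set.univ.pi fun j => Set.Ico (a j) (b j))
    (MeasurableSet.univ_pi fun j => measurableSet_Ico).nullMeasurableSet
  have heq : (⇑(MeasurableEquiv.toLp 2 (Fin d → ℝ)).symm) ⁻¹'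
        (Set.univ.pi fun j => Set.Ico (a j) (b j)) = rect d a b := by
    ext x; simp [rect, Set.mem_pi]
  rw [heq] at h
  rw [h, volume_pi_pi]; simp [Real.volume_Ico]

/-- Finite binary expansion `∑_{k<K} p_k 2^{-(k+1)}`. -/
noncomputable def binF (p : ℕ → Bool) (K : ℕ) : ℝ :=
  ∑ k ∈ Finset.range K, ((p k).toNat : ℝ) / 2 ^ (k + 1)

lemma geom_tail (ℓ K : ℕ) (h : ℓ ≤ K) :
    ∑ k ∈ Finset.Ico ℓ K, (((2:ℝ) ^ (k + 1))⁻¹) = ((2:ℝ)^ℓ)⁻¹ - ((2:ℝ)^K)⁻¹ := by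
  induction K, h using Nat.le_induction with
  | base => simp
  | succ K hK ih =>
      rw [Finset.sum_Ico_succ_top hK, ih]
      have h2 : ((2:ℝ)^K) ≠ 0 := by positivity
      field_simp
      ring

lemma binF_mono (p : ℕ → Bool) {ℓ K : ℕ} (h : ℓ ≤ K) : binF p ℓ ≤ binF p K := by
  unfold binF
  apply Finset.sum_le_sum_of_subset_of_nonneg (Finset.range_subset_range.2 h)
  intro k _ _; positivity

lemma binF_tail (p : ℕ → Bool) {ℓ K : ℕ} (h : ℓ ≤ K) :
    binF p K ≤ binF p ℓ + ((2:ℝ)^ℓ)⁻¹ - ((2:ℝ)^K)⁻¹ := by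
  unfold binF
  rw [← Finset.sum_range_add_sum_Ico _ h]
  have : ∑ k ∈ Finset.Ico ℓ K, ((p k).toNat : ℝ) / 2 ^ (k + 1)
      ≤ ∑ k ∈ Finset.Ico ℓ K, (((2:ℝ) ^ (k + 1))⁻¹) := by
    apply Finset.sum_le_sum
    intro k _
    rw [div_eq_mul_inv]
    have : ((p k).toNat : ℝ) ≤ 1 := by cases p k <;> simp
    nlinarith [inv_pos.2 (pow_pos (by norm_num : (0:ℝ) < 2) (k+1))]
  rw [geom_tail ℓ K h] at this
  linarith

lemma binF_agree {p q : ℕ → Bool} {ℓ : ℕ} (h : ∀ k < ℓ, p k = q k) : binF p ℓ = binF q ℓ := by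
  unfold binF
  apply Finset.sum_congr rfl
  intro k hk
  rw [h k (Finset.mem_range.1 hk)]

/-- If `p` and `q` agree below `k0`, `p k0 = true`, `q k0 = false`, then the full expansion
of `p` exceeds the level-`ℓ` truncation of `q` by at least `2^{-ℓ}`. -/
lemma binF_sep_up {p q : ℕ → Bool} {k0 ℓ K : ℕ} (hk0 : k0 < ℓ) (hℓK : ℓ ≤ K)
    (hag : ∀ k < k0, p k = q k) (hp : p k0 = true) (hq : q k0 = false) :
    binF q ℓ + ((2:ℝ)^ℓ)⁻¹ ≤ binF p K := by
  have h1 : binF p k0 = binF q k0 := binF_agree hag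
  have h2 : binF p (k0 + 1) ≤ binF p K := binF_mono p (by omega)
  have h3 : binF p (k0 + 1) = binF p k0 + ((2:ℝ)^(k0+1))⁻¹ := by
    unfold binF; rw [Finset.sum_range_succ, hp]; simp [div_eq_mul_inv]
  have h4 : binF q ℓ ≤ binF q (k0+1) + ((2:ℝ)^(k0+1))⁻¹ - ((2:ℝ)^ℓ)⁻¹ := binF_tail q hk0
  have h5 : binF q (k0 + 1) = binF q k0 := by
    unfold binF; rw [Finset.sum_range_succ, hq]; simp
  linarith

lemma binF_sep_down {p q : ℕ → Bool} {k0 ℓ K : ℕ} (hk0 : k0 < ℓ) (hℓK : ℓ ≤ K)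
    (hp : p k0 = false) (hq : q k0 = true) (hag : ∀ k < k0, p k = q k) :
    binF p K < binF q ℓ := by
  have h1 : binF p k0 = binF q k0 := binF_agree hag
  have h2 : binF p K ≤ binF p (k0+1) + ((2:ℝ)^(k0+1))⁻¹ - ((2:ℝ)^K)⁻¹ :=
    binF_tail p (by omega)
  have h3 : binF p (k0 + 1) = binF p k0 := by
    unfold binF; rw [Finset.sum_range_succ, hp]; simp
  have h4 : binF q (k0+1) = binF q k0 + ((2:ℝ)^(k0+1))⁻¹ := by
    unfold binF; rw [Finset.sum_range_succ, hq]; simp [div_eq_mul_inv]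
  have h5 : binF q (k0+1) ≤ binF q ℓ := binF_mono q hk0
  have h6 : (0:ℝ) < ((2:ℝ)^K)⁻¹ := by positivity
  linarith
/-- The value of the word `u` of length `ℓ` in base `2^d`. -/
def wordVal (d ℓ : ℕ) (u : ℕ → ℕ) : ℕ := ∑ k ∈ Finset.range ℓ, u k * (2 ^ d) ^ k

lemma wordVal_lt (d ℓ : ℕ) (u : ℕ → ℕ) (hu : ∀ k < ℓ, u k < 2 ^ d) :
    wordVal d ℓ u < (2 ^ d) ^ ℓ := by
  induction ℓ with
  | zero => simp [wordVal]
  | succ ℓ ih =>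
      have h1 := ih (fun k hk => hu k (by omega))
      have h2 := hu ℓ (by omega)
      have : wordVal d (ℓ+1) u = wordVal d ℓ u + u ℓ * (2^d)^ℓ := by
        simp [wordVal, Finset.sum_range_succ]
      rw [this, pow_succ]
      nlinarith
 
lemma digits_iff_mod (d ℓ m : ℕ) (u : ℕ → ℕ) (hu : ∀ k < ℓ, u k < 2 ^ d) :
    (∀ k < ℓ, m / (2^d) ^ k % 2^d = u k) ↔ m % (2^d) ^ ℓ = wordVal d ℓ u := by
  induction ℓ with
  | zero => simp [wordVal, Nat.mod_one]
  | succ ℓ ih =>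
      have hu' : ∀ k < ℓ, u k < 2 ^ d := fun k hk => hu k (by omega)
      have ihℓ := ih hu'
      have hms : m % (2^d)^(ℓ+1) = m % (2^d)^ℓ + (2^d)^ℓ * (m / (2^d)^ℓ % 2^d) :=
        Nat.mod_pow_succ
      have hwv : wordVal d (ℓ+1) u = wordVal d ℓ u + (2^d)^ℓ * u ℓ := by
        simp [wordVal, Finset.sum_range_succ]; ring
      constructor
      · intro h
        rw [hms, hwv, (ihℓ.1 (fun k hk => h k (by omega))), h ℓ (by omega)]
      · intro h
        have hlt1 : m % (2^d)^ℓ < (2^d)^ℓ :=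
          Nat.mod_lt _ (by positivity)
        have hlt2 : wordVal d ℓ u < (2^d)^ℓ := wordVal_lt d ℓ u hu'
        rw [hms, hwv] at h
        -- uniqueness of division
        have e1 : m % (2^d)^ℓ = wordVal d ℓ u := by
          have := congrArg (· % (2^d)^ℓ) h
          simpa [Nat.add_mul_mod_self_left, Nat.mod_eq_of_lt hlt1, Nat.mod_eq_of_lt hlt2]
            using this
        have e2 : m / (2^d)^ℓ % 2^d = u ℓ := by
          have := congrArg (· / (2^d)^ℓ) h
          simp only [Nat.add_mul_div_left _ _ (show 0 < (2^d)^ℓ by positivity)] at this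
          rw [Nat.div_eq_of_lt hlt1, Nat.div_eq_of_lt hlt2] at this
          omega
        intro k hk
        rcases Nat.lt_or_ge k ℓ with h' | h'
        · exact ihℓ.2 e1 k h'
        · have : k = ℓ := by omega
          rw [this]; exact e2

lemma digitalPoint_coord (d n K : ℕ) (j : Fin d) (hK : n - 1 < (2 ^ d) ^ K) :
    digitalPoint d n j = binF (fun k => Nat.testBit ((n - 1) / (2 ^ d) ^ k % 2 ^ d) j.val) K := by
  unfold digitalPoint binF
  apply tsum_eq_sum
  intro k hk
  have hk' : K ≤ k := by simpa using hk
  have : (n-1) / (2^d)^k = 0 := by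
    apply Nat.div_eq_of_lt
    calc n - 1 < (2^d)^K := hK
    _ ≤ (2^d)^k := Nat.pow_le_pow_right (Nat.one_le_two_pow) hk'
  simp [this]

lemma cubeCorner_eq_binF (d ℓ : ℕ) (u : ℕ → ℕ) (j : Fin d) :
    cubeCorner d ℓ u j = binF (fun k => Nat.testBit (u k) j.val) ℓ := rfl

/-- Membership characterization: `x_n ∈ C_u` iff the first `ℓ` base-`2^d` digits of `n-1`
agree with `u`. -/
lemma mem_dyadicCube_iff (d ℓ n : ℕ) (hd : 1 ≤ d) (u : ℕ → ℕ) (hu : ∀ k < ℓ, u k < 2 ^ d) :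
    digitalPoint d n ∈ dyadicCube d ℓ u ↔ (n - 1) % (2^d) ^ ℓ = wordVal d ℓ u := by
  rw [← digits_iff_mod d ℓ (n-1) u hu]
  set m := n - 1 with hm
  set K := ℓ + (m + 1) with hKdef
  have hK : m < (2^d)^K := by
    calc m < 2^K := by
          have := Nat.lt_two_pow_self (n := K)
          omega
    _ ≤ (2^d)^K := by
          rw [← pow_mul]
          exact Nat.pow_le_pow_right (by norm_num) (by nlinarith)
  have hcoord : ∀ j : Fin d, digitalPoint d n j
      = binF (fun k => Nat.testBit (m / (2^d)^k % 2^d) j.val) K := fun j =>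
    digitalPoint_coord d n K j hK
  have hℓK : ℓ ≤ K := by omega
  constructor
  · -- in cube → digits agree
    intro hmem
    by_contra hne
    push_neg at hne
    obtain ⟨k1, hk1ℓ, hk1⟩ := hne
    -- minimal bad index
    have hex : ∃ k, k < ℓ ∧ m / (2^d)^k % 2^d ≠ u k := ⟨k1, hk1ℓ, hk1⟩
    classical
    set k0 := Nat.find hex with hk0def
    obtain ⟨hk0ℓ, hk0⟩ := Nat.find_spec hex
    have hagd' : ∀ k < k0, m / (2^d)^k % 2^d = u k := by
      intro k hk
      have h := Nat.find_min hex hk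
      by_contra hc
      exact h ⟨by omega, hc⟩
    have hdm : m / (2^d)^k0 % 2^d < 2^d := Nat.mod_lt _ (by positivity)
    have hum : u k0 < 2^d := hu k0 hk0ℓ
    have hexj : ∃ j : Fin d, Nat.testBit (m / (2^d)^k0 % 2^d) j.val ≠ Nat.testBit (u k0) j.val := by
      by_contra hc
      push_neg at hc
      apply hk0
      apply Nat.eq_of_testBit_eq
      intro i
      rcases Nat.lt_or_ge i d with hi | hi
      · exact hc ⟨i, hi⟩
      · rw [Nat.testBit_lt_two_pow, Nat.testBit_lt_two_pow]
        · exact lt_of_lt_of_le hum (Nat.pow_le_pow_right (by norm_num) hi)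
        · exact lt_of_lt_of_le hdm (Nat.pow_le_pow_right (by norm_num) hi)
    obtain ⟨j, hj⟩ := hexj
    have hmemj := hmem j
    rw [hcoord j, cubeCorner_eq_binF] at hmemj
    set p := fun k => Nat.testBit (m / (2^d)^k % 2^d) j.val with hp
    set q := fun k => Nat.testBit (u k) j.val with hq
    have hag : ∀ k < k0, p k = q k := by
      intro k hk; simp only [hp, hq]; rw [hagd' k hk]
    rcases Bool.eq_false_or_eq_true (p k0) with hpk | hpk
    · have hqk : q k0 = false := by
        rcases Bool.eq_false_or_eq_true (q k0) with h' | h'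
        · exact absurd (hpk.trans h'.symm) hj
        · exact h'
      have := binF_sep_up (p := p) (q := q) hk0ℓ hℓK hag hpk hqk
      exact absurd hmemj.2 (by linarith)
    · have hqk : q k0 = true := by
        rcases Bool.eq_false_or_eq_true (q k0) with h' | h'
        · exact h'
        · exact absurd (hpk.trans h'.symm) hj
      have := binF_sep_down (p := p) (q := q) hk0ℓ hℓK hpk hqk hag
      exact absurd hmemj.1 (by linarith)
  · -- digits agree → in cube
    intro hdig j
    have hag : ∀ k < ℓ, (fun k => Nat.testBit (m / (2^d)^k % 2^d) j.val) k
        = (fun k => Nat.testBit (u k) j.val) k := by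
      intro k hk; simp only []; rw [hdig k hk]
    rw [hcoord j, cubeCorner_eq_binF]
    constructor
    · calc binF (fun k => Nat.testBit (u k) j.val) ℓ
          = binF (fun k => Nat.testBit (m / (2^d)^k % 2^d) j.val) ℓ := (binF_agree hag).symm
      _ ≤ _ := binF_mono _ hℓK
    · have h1 := binF_tail (fun k => Nat.testBit (m / (2^d)^k % 2^d) j.val) hℓK
      have h2 := binF_agree hag
      have h3 : (0:ℝ) < ((2:ℝ)^K)⁻¹ := by positivity
      linarith
lemma wordVal_extend (d ℓ v : ℕ) (u : ℕ → ℕ) :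
    wordVal d (ℓ+1) (extendWord ℓ u v) = wordVal d ℓ u + v * (2^d)^ℓ := by
  unfold wordVal
  rw [Finset.sum_range_succ]
  congr 1
  · apply Finset.sum_congr rfl
    intro k hk
    simp [extendWord, Finset.mem_range.1 hk]
  · simp [extendWord]

/-- Number of `m < N` with `m % T = c`. -/
def classCard (N T c : ℕ) : ℕ := ((Finset.range N).filter fun m => m % T = c).card

lemma classCard_lower (N T c : ℕ) (hc : c < T) : N / T ≤ classCard N T c := by
  have hT : 0 < T := by omega
  classical
  have : (Finset.range (N / T)).card ≤ classCard N T c := by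
    apply Finset.card_le_card_of_injOn (fun i => c + i * T)
    · intro i hi
      simp only [Finset.coe_range, Set.mem_Iio] at hi
      simp only [Finset.coe_filter, Finset.mem_range, Set.mem_setOf_eq]
      constructor
      · have h1 : i + 1 ≤ N / T := hi
        have h2 : (i + 1) * T ≤ (N / T) * T := Nat.mul_le_mul_right _ h1
        have h3 : (N / T) * T ≤ N := Nat.div_mul_le_self N T
        nlinarith
      · simp [Nat.add_mul_mod_self_right, Nat.mod_eq_of_lt hc]
    · intro i _ j _ h
      simp only at h
      have := Nat.eq_of_mul_eq_mul_right hT (by omega : i * T = j * T)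
      omega
  simpa using this

lemma classCard_upper (N T c : ℕ) (hT : 0 < T) : classCard N T c ≤ N / T + 1 := by
  classical
  have : classCard N T c ≤ (Finset.range (N / T + 1)).card := by
    apply Finset.card_le_card_of_injOn (fun m => m / T)
    · intro m hm
      simp only [Finset.coe_filter, Finset.mem_range, Set.mem_setOf_eq] at hm
      simp only [Finset.coe_range, Set.mem_Iio]
      have : m / T ≤ N / T := Nat.div_le_div_right (by omega)
      omega
    · intro m1 hm1 m2 hm2 h
      simp only [Finset.mem_coe, Finset.mem_filter, Finset.mem_range] at hm1 hm2
      simp only at h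
      have e1 := Nat.div_add_mod m1 T
      have e2 := Nat.div_add_mod m2 T
      rw [hm1.2] at e1; rw [hm2.2] at e2
      rw [h] at e1
      omega
  simpa using this

lemma classCard_partition (N d ℓ c : ℕ) (hc : c < (2^d)^ℓ) :
    classCard N ((2^d)^ℓ) c
      = ∑ v ∈ Finset.range (2^d), classCard N ((2^d)^(ℓ+1)) (c + v * (2^d)^ℓ) := by
  classical
  unfold classCard
  rw [← Finset.card_biUnion]
  · congr 1
    ext m
    simp only [Finset.mem_filter, Finset.mem_range, Finset.mem_biUnion]
    constructor
    · rintro ⟨hmN, hmc⟩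
      refine ⟨m / (2^d)^ℓ % 2^d, ⟨Nat.mod_lt _ (by positivity), hmN, ?_⟩⟩
      rw [Nat.mod_pow_succ, hmc]; ring
    · rintro ⟨v, hv, hmN, hmv⟩
      refine ⟨hmN, ?_⟩
      have h1 : m % (2^d)^ℓ = (m % (2^d)^(ℓ+1)) % (2^d)^ℓ :=
        (Nat.mod_mod_of_dvd m (by rw [pow_succ]; exact Dvd.intro _ rfl)).symm
      rw [h1, hmv, Nat.add_mul_mod_self_right, Nat.mod_eq_of_lt hc]
  · intro v hv w hw hvw
    simp only [Finset.disjoint_left, Finset.mem_filter, Finset.mem_range]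
    rintro m ⟨hmN, hmv⟩ ⟨-, hmw⟩
    rw [hmv] at hmw
    have hpos : 0 < (2^d)^ℓ := by positivity
    have := Nat.eq_of_mul_eq_mul_right hpos (by omega : v * (2^d)^ℓ = w * (2^d)^ℓ)
    exact hvw this
lemma prefixCount_eq_classCard (d N ℓ : ℕ) (hd : 1 ≤ d) (u : ℕ → ℕ)
    (hu : ∀ k < ℓ, u k < 2 ^ d) :
    prefixCount d N ℓ u = classCard N ((2^d)^ℓ) (wordVal d ℓ u) := by
  classical
  unfold prefixCount
  have hset : {n : ℕ | 1 ≤ n ∧ n ≤ N ∧ digitalPoint d n ∈ dyadicCube d ℓ u}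
      = ↑((Finset.Icc 1 N).filter fun n => (n - 1) % (2^d)^ℓ = wordVal d ℓ u) := by
    ext n
    simp only [Set.mem_setOf_eq, Finset.coe_filter, Finset.mem_Icc, Set.mem_setOf_eq]
    rw [mem_dyadicCube_iff d ℓ n hd u hu]
    tauto
  rw [hset, Set.ncard_coe_finset]
  unfold classCard
  apply Finset.card_bij' (fun n _ => n - 1) (fun m _ => m + 1)
  · intro n hn
    simp only [Finset.mem_filter, Finset.mem_Icc] at hn
    omega
  · intro m _
    omega
  · intro n hn
    simp only [Finset.mem_filter, Finset.mem_Icc] at hn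
    simp only [Finset.mem_filter, Finset.mem_range]
    exact ⟨by omega, hn.2⟩
  · intro m hm
    simp only [Finset.mem_filter, Finset.mem_range] at hm
    simp only [Finset.mem_filter, Finset.mem_Icc]
    refine ⟨⟨by omega, by omega⟩, by simpa using hm.2⟩
section MP
variable (d N ℓ : ℕ) (u : ℕ → ℕ)

/-- Sum of `M(u∗v')` over digits `v' < 2^d` agreeing with `r` in binary positions `< t`. -/
noncomputable def mpSum (t r : ℕ) : ℕ :=
  ∑ v' ∈ Finset.range (2^d), if v' % 2^t = r % 2^t
    then prefixCount d N (ℓ+1) (extendWord ℓ u v') else 0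

variable (hd : 1 ≤ d) (hu : ∀ k < ℓ, u k < 2 ^ d)

include hu in
lemma extendWord_lt (v : ℕ) (hv : v < 2^d) : ∀ k < ℓ + 1, extendWord ℓ u v k < 2^d := by
  intro k hk
  unfold extendWord
  split
  · exact hu k (by assumption)
  · exact hv

include hd hu in
lemma prefixCount_extend (v : ℕ) (hv : v < 2^d) :
    prefixCount d N (ℓ+1) (extendWord ℓ u v)
      = classCard N ((2^d)^(ℓ+1)) (wordVal d ℓ u + v * (2^d)^ℓ) := by
  rw [prefixCount_eq_classCard d N (ℓ+1) hd _ (extendWord_lt d ℓ u hu v hv),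
    wordVal_extend]

lemma mpSum_congr (t r r' : ℕ) (h : r % 2^t = r' % 2^t) : mpSum d N ℓ u t r = mpSum d N ℓ u t r' := by
  unfold mpSum
  apply Finset.sum_congr rfl
  intro v' _
  rw [h]

include hd hu in
lemma mpSum_zero (r : ℕ) : mpSum d N ℓ u 0 r = prefixCount d N ℓ u := by
  unfold mpSum
  simp only [pow_zero, Nat.mod_one, if_true]
  rw [prefixCount_eq_classCard d N ℓ hd u hu,
    classCard_partition N d ℓ _ (wordVal_lt d ℓ u hu)]
  apply Finset.sum_congr rfl
  intro v' hv'
  rw [prefixCount_extend d N ℓ u hd hu v' (Finset.mem_range.1 hv')]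

lemma mpSum_top (r : ℕ) (hr : r < 2^d) :
    mpSum d N ℓ u d r = prefixCount d N (ℓ+1) (extendWord ℓ u r) := by
  unfold mpSum
  rw [Finset.sum_eq_single r]
  · simp [Nat.mod_eq_of_lt hr]
  · intro v' hv' hne
    have : v' % 2^d = v' := Nat.mod_eq_of_lt (Finset.mem_range.1 hv')
    rw [this, Nat.mod_eq_of_lt hr, if_neg hne]
  · intro h
    exact absurd (Finset.mem_range.2 hr) h

lemma mpSum_split (t r : ℕ) :
    mpSum d N ℓ u t r
      = mpSum d N ℓ u (t+1) (r % 2^t) + mpSum d N ℓ u (t+1) (r % 2^t + 2^t) := by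
  unfold mpSum
  rw [← Finset.sum_add_distrib]
  apply Finset.sum_congr rfl
  intro v' _
  have h2t : (0:ℕ) < 2^t := by positivity
  have hpow : (2:ℕ)^(t+1) = 2 * 2^t := by ring
  have h1 : v' % 2^(t+1) = v' % 2^t + 2^t * (v' / 2^t % 2) := Nat.mod_pow_succ
  have h2 : (r % 2^t) % 2^(t+1) = r % 2^t := Nat.mod_eq_of_lt (by omega)
  have h3 : (r % 2^t + 2^t) % 2^(t+1) = r % 2^t + 2^t := Nat.mod_eq_of_lt (by omega)
  have h4 : v' % 2^t < 2^t := Nat.mod_lt _ h2t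
  have h5 : r % 2^t < 2^t := Nat.mod_lt _ h2t
  have h6 : v' / 2^t % 2 = 0 ∨ v' / 2^t % 2 = 1 := by omega
  rcases h6 with h6 | h6 <;> rw [h6] at h1 <;> split_ifs <;> omega

include hd hu in
lemma mpSum_bounds (t r : ℕ) (ht : t ≤ d) :
    (N / (2^d)^(ℓ+1)) * 2^(d-t) ≤ mpSum d N ℓ u t r
      ∧ mpSum d N ℓ u t r ≤ (N / (2^d)^(ℓ+1) + 1) * 2^(d-t) := by
  classical
  set q := N / (2^d)^(ℓ+1) with hq
  have hcard : ((Finset.range (2^d)).filter fun v' => v' % 2^t = r % 2^t).card = 2^(d-t) := by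
    rw [← Finset.card_range (2^(d-t))]
    apply Finset.card_bij' (fun m _ => m / 2^t) (fun i _ => r % 2^t + i * 2^t)
    case hi =>
      intro m hm
      simp only [Finset.mem_filter, Finset.mem_range] at hm
      simp only [Finset.mem_range]
      have h1 : m / 2^t < 2^d / 2^t := by
        apply Nat.div_lt_div_of_lt_of_dvd
        · exact pow_dvd_pow 2 ht
        · exact hm.1
      rwa [Nat.pow_div ht (by norm_num)] at h1
    case hj =>
      intro i hi
      simp only [Finset.mem_range] at hi
      simp only [Finset.mem_filter, Finset.mem_range]
      constructor
      · have h5 : r % 2^t < 2^t := Nat.mod_lt _ (by positivity)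
        have h1 : r % 2^t + i * 2^t < (i+1) * 2^t := by nlinarith
        have h2 : (i+1) * 2^t ≤ 2^(d-t) * 2^t := by
          apply Nat.mul_le_mul_right; omega
        have h3 : (2:ℕ)^(d-t) * 2^t = 2^d := by
          rw [← pow_add]; congr 1; omega
        omega
      · simp [Nat.add_mul_mod_self_right, Nat.mod_mod]
    case left_inv =>
      intro m hm
      simp only [Finset.mem_filter, Finset.mem_range] at hm
      rw [← hm.2, Nat.mod_add_div']
    case right_inv =>
      intro i hi
      have h5 : r % 2^t < 2^t := Nat.mod_lt _ (by positivity)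
      rw [Nat.add_mul_div_right _ _ (by positivity : 0 < (2:ℕ)^t), Nat.div_eq_of_lt h5,
        Nat.zero_add]
  have hterm : ∀ v' ∈ (Finset.range (2^d)).filter (fun v' => v' % 2^t = r % 2^t),
      q ≤ prefixCount d N (ℓ+1) (extendWord ℓ u v')
        ∧ prefixCount d N (ℓ+1) (extendWord ℓ u v') ≤ q + 1 := by
    intro v' hv'
    simp only [Finset.mem_filter, Finset.mem_range] at hv'
    rw [prefixCount_extend d N ℓ u hd hu v' hv'.1]
    constructor
    · apply classCard_lower
      have h1 : wordVal d ℓ u < (2^d)^ℓ := wordVal_lt d ℓ u hu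
      have h2 : v' + 1 ≤ 2^d := hv'.1
      have h3 : (v' + 1) * (2^d)^ℓ ≤ 2^d * (2^d)^ℓ := Nat.mul_le_mul_right _ h2
      have h4 : ((2:ℕ)^d)^(ℓ+1) = 2^d * (2^d)^ℓ := by ring
      nlinarith
    · exact classCard_upper N _ _ (by positivity)
  have hsum : mpSum d N ℓ u t r
      = ∑ v' ∈ (Finset.range (2^d)).filter (fun v' => v' % 2^t = r % 2^t),
          prefixCount d N (ℓ+1) (extendWord ℓ u v') := by
    unfold mpSum
    rw [Finset.sum_filter]
  constructor
  · rw [hsum, ← hcard]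
    calc q * ((Finset.range (2^d)).filter fun v' => v' % 2^t = r % 2^t).card
        = ∑ _v' ∈ (Finset.range (2^d)).filter (fun v' => v' % 2^t = r % 2^t), q := by
          rw [Finset.sum_const, Nat.mul_comm]; rfl
      _ ≤ _ := Finset.sum_le_sum (fun v' hv' => (hterm v' hv').1)
  · rw [hsum, ← hcard]
    calc ∑ v' ∈ (Finset.range (2^d)).filter (fun v' => v' % 2^t = r % 2^t),
          prefixCount d N (ℓ+1) (extendWord ℓ u v')
        ≤ ∑ _v' ∈ (Finset.range (2^d)).filter (fun v' => v' % 2^t = r % 2^t), (q+1) :=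
          Finset.sum_le_sum (fun v' hv' => (hterm v' hv').2)
      _ = _ := by rw [Finset.sum_const, Nat.mul_comm]; rfl
end MP

lemma geo_nat (d : ℕ) (hd : 2 ≤ d) (n : ℕ) :
    ∑ r ∈ Finset.range n, (2:ℕ)^(r*(d-1)) ≤ 2^(n*(d-1)) := by
  induction n with
  | zero => simp
  | succ n ih =>
      rw [Finset.sum_range_succ]
      have h1 : n*(d-1)+1 ≤ (n+1)*(d-1) := by
        have h2 : (n+1)*(d-1) = n*(d-1) + (d-1) := by ring
        omega
      have h3 : 2^(n*(d-1)) + 2^(n*(d-1)) ≤ 2^((n+1)*(d-1)) := by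
        calc 2^(n*(d-1)) + 2^(n*(d-1)) = 2^(n*(d-1)+1) := by ring
        _ ≤ _ := Nat.pow_le_pow_right (by norm_num) h1
      omega

lemma prod_div_telescope (f : ℕ → ℝ) (n : ℕ) (hf : ∀ i ≤ n, f i ≠ 0) :
    ∏ i ∈ Finset.range n, f (i+1) / f i = f n / f 0 := by
  induction n with
  | zero => simp [div_self (hf 0 le_rfl)]
  | succ n ih =>
      rw [Finset.prod_range_succ, ih (fun i hi => hf i (by omega))]
      have h1 : f n ≠ 0 := hf n (by omega)
      have h0 : f 0 ≠ 0 := hf 0 (by omega)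
      field_simp

lemma cubeCorner_extend (d ℓ v : ℕ) (u : ℕ → ℕ) (j : Fin d) :
    cubeCorner d (ℓ+1) (extendWord ℓ u v) j
      = cubeCorner d ℓ u j + ((Nat.testBit v j.val).toNat : ℝ) * ((2:ℝ)^(ℓ+1))⁻¹ := by
  unfold cubeCorner
  rw [Finset.sum_range_succ]
  congr 1
  · apply Finset.sum_congr rfl
    intro k hk
    simp [extendWord, Finset.mem_range.1 hk]
  · simp [extendWord, div_eq_mul_inv]

set_option maxHeartbeats 2000000 in
theorem stmt_12 (d : ℕ) (hd : 2 ≤ d) (N : ℕ) (hN : (2 ^ d) ^ 2 < N)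
    (L : ℕ) (hL : N ≤ (2 ^ d) ^ L) (hLmin : ∀ l < L, (2 ^ d) ^ l < N)
    (ℓ : ℕ) (hℓ : ℓ ≤ L - 3)
    (u : ℕ → ℕ) (hu : ∀ k < ℓ, u k < 2 ^ d)
    (a b : Fin d → ℝ)
    (hvol : volume (rect d a b) = (prefixCount d N ℓ u : ℝ≥0∞) / N)
    (ha : ∀ j, |a j - cubeCorner d ℓ u j| ≤ driftS d N ℓ)
    (hb : ∀ j, |b j - (cubeCorner d ℓ u j + ((2:ℝ) ^ ℓ)⁻¹)| ≤ driftS d N ℓ) :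
    ∃ a' b' : Fin (2 ^ d) → Fin d → ℝ,
      (Pairwise fun v w => Disjoint (rect d (a' v) (b' v)) (rect d (a' w) (b' w))) ∧
      volume (rect d a b \ ⋃ v, rect d (a' v) (b' v)) = 0 ∧
      volume ((⋃ v, rect d (a' v) (b' v)) \ rect d a b) = 0 ∧
      (∀ v : Fin (2 ^ d),
        volume (rect d (a' v) (b' v)) =
          (prefixCount d N (ℓ + 1) (extendWord ℓ u v.val) : ℝ≥0∞) / N) ∧
      (∀ (v : Fin (2 ^ d)) (j : Fin d),
        |a' v j - cubeCorner d (ℓ + 1) (extendWord ℓ u v.val) j| ≤ driftS d N (ℓ + 1) ∧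
        |b' v j - (cubeCorner d (ℓ + 1) (extendWord ℓ u v.val) j + ((2:ℝ) ^ (ℓ + 1))⁻¹)| ≤
          driftS d N (ℓ + 1)) := by
  classical
  -- ## basic numerics
  have hd1 : 1 ≤ d := by omega
  have hb4 : (4:ℕ) ≤ 2^d := by
    calc (4:ℕ) = 2^2 := rfl
    _ ≤ 2^d := Nat.pow_le_pow_right (by norm_num) hd
  have hNpos : 0 < N := by omega
  have hNR : (0:ℝ) < N := by exact_mod_cast hNpos
  have hL3 : 3 ≤ L := by
    by_contra hc
    push_neg at hc
    have h1 : (2^d)^L ≤ (2^d)^2 := Nat.pow_le_pow_right (by positivity) (by omega)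
    omega
  have hl2L : ℓ + 2 < L := by omega
  have hBN : (2^d)^(ℓ+2) < N := hLmin _ hl2L
  have hBltN : (2^d)^(ℓ+1) < N := hLmin _ (by omega)
  have hBpos : 0 < (2^d)^(ℓ+1) := by positivity
  set q := N / (2^d)^(ℓ+1) with hqdef
  have hq1 : 1 ≤ q := (Nat.one_le_div_iff hBpos).2 hBltN.le
  have hqR : (1:ℝ) ≤ (q:ℝ) := by exact_mod_cast hq1
  have hB2d : (2^d)^(ℓ+1) * 2^d = (2^d)^(ℓ+2) := by rw [← pow_succ]
  -- `N ≤ q·B·2^(d-1)`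
  have hqBN : N ≤ q * (2^d)^(ℓ+1) * 2^(d-1) := by
    have h1 : N % (2^d)^(ℓ+1) < (2^d)^(ℓ+1) := Nat.mod_lt _ hBpos
    have h2 : q * (2^d)^(ℓ+1) + N % (2^d)^(ℓ+1) = N := by
      rw [hqdef, Nat.mul_comm]; exact Nat.div_add_mod N _
    have h3 : (2^d)^(ℓ+1) ≤ q * (2^d)^(ℓ+1) := Nat.le_mul_of_pos_left _ hq1
    have h4 : N ≤ q * (2^d)^(ℓ+1) * 2 := by omega
    have h5 : (2:ℕ) ≤ 2^(d-1) := by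
      calc (2:ℕ) = 2^1 := rfl
      _ ≤ 2^(d-1) := Nat.pow_le_pow_right (by norm_num) (by omega)
    calc N ≤ q * (2^d)^(ℓ+1) * 2 := h4
    _ ≤ q * (2^d)^(ℓ+1) * 2^(d-1) := Nat.mul_le_mul_left _ h5
  -- ## counting facts
  have hmpb : ∀ (t r : ℕ), t ≤ d → q * 2^(d-t) ≤ mpSum d N ℓ u t r
      ∧ mpSum d N ℓ u t r ≤ (q + 1) * 2^(d-t) := by
    intro t r ht
    rw [hqdef]
    exact mpSum_bounds d N ℓ u hd1 hu t r ht
  have hmppos : ∀ t r, t ≤ d → 0 < mpSum d N ℓ u t r := by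
    intro t r ht
    have h1 := (hmpb t r ht).1
    have h2 : 0 < q * 2^(d-t) := Nat.mul_pos (by omega) (by positivity)
    omega
  have hM0 : ∀ r, mpSum d N ℓ u 0 r = prefixCount d N ℓ u :=
    fun r => mpSum_zero d N ℓ u hd1 hu r
  have hMpos : 0 < prefixCount d N ℓ u := hM0 0 ▸ hmppos 0 0 (by omega)
  have hMR : (0:ℝ) < (prefixCount d N ℓ u : ℝ) := by exact_mod_cast hMpos
  have hsplit := mpSum_split d N ℓ u
  have hcongr := mpSum_congr d N ℓ u
  have hmul : ℓ*(d-1) + ℓ = ℓ*d := by rw [← Nat.mul_succ]; congr 1; omega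
  -- ## drift numerics
  have hS0 : 0 ≤ driftS d N ℓ := Finset.sum_nonneg (fun r _ => by positivity)
  have hΔ0 : (0:ℝ) ≤ 2^(2*d-3) * 2^(ℓ*(d-1)) / N := by positivity
  have hSΔ : driftS d N ℓ ≤ 2^(2*d-3) * 2^(ℓ*(d-1)) / N := by
    have hgeo : (∑ r ∈ Finset.range ℓ, (2:ℝ)^(r*(d-1))) ≤ 2^(ℓ*(d-1)) := by
      exact_mod_cast geo_nat d hd ℓ
    unfold driftS
    rw [← Finset.sum_div, ← Finset.mul_sum]
    gcongr
  have h2ℓpos : (0:ℝ) < ((2:ℝ)^ℓ)⁻¹ := by positivity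
  have hΔ8 : 2^(2*d-3) * 2^(ℓ*(d-1)) / N ≤ ((2:ℝ)^ℓ)⁻¹/8 := by
    have hcast : ((2:ℕ)^d : ℝ)^(ℓ+2) ≤ (N:ℝ) := by exact_mod_cast hBN.le
    have hkey : (8:ℝ) * (2^(2*d-3) * 2^(ℓ*(d-1))) * 2^ℓ = ((2:ℕ)^d : ℝ)^(ℓ+2) := by
      have hexp : d*(ℓ+2) = 3 + (2*d-3) + (ℓ*(d-1) + ℓ) := by
        have hdm : d*(ℓ+2) = ℓ*d + 2*d := by ring
        omega
      push_cast
      rw [← pow_mul, hexp, pow_add, pow_add, pow_add]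
      norm_num
      ring
    rw [div_le_div_iff₀ hNR (by norm_num : (0:ℝ) < 8), inv_mul_eq_div,
      le_div_iff₀ (by positivity : (0:ℝ) < (2:ℝ)^ℓ)]
    have h9 : 2^(2*d-3) * 2^(ℓ*(d-1)) * 8 * (2:ℝ)^ℓ = ((2:ℕ)^d : ℝ)^(ℓ+2) := by
      rw [← hkey]; ring
    rw [h9]
    exact hcast
  -- ## β = side lengths of R_u
  have hβlow : ∀ j, ((2:ℝ)^ℓ)⁻¹ - 2*driftS d N ℓ ≤ b j - a j := by
    intro j
    have h1 := abs_le.1 (ha j)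
    have h2 := abs_le.1 (hb j)
    have := h1.2; have := h2.1
    linarith
  have hβhigh : ∀ j, b j - a j ≤ ((2:ℝ)^ℓ)⁻¹ + 2*driftS d N ℓ := by
    intro j
    have h1 := abs_le.1 (ha j)
    have h2 := abs_le.1 (hb j)
    linarith [h1.1, h2.2]
  have hβpos : ∀ j, 0 < b j - a j := by
    intro j
    have := hβlow j
    linarith [hSΔ, hΔ8, h2ℓpos]
  -- ## the splitting ratios
  set ρ : ℕ → ℕ → ℝ := fun t r =>
    ((mpSum d N ℓ u (t+1) (r % 2^t) : ℝ)) / ((mpSum d N ℓ u t r : ℝ)) with hρdef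
  have hρ01 : ∀ t, t < d → ∀ r, 0 ≤ ρ t r ∧ ρ t r ≤ 1 := by
    intro t ht r
    have hden : 0 < mpSum d N ℓ u t r := hmppos t r ht.le
    have hdenR : (0:ℝ) < (mpSum d N ℓ u t r : ℝ) := by exact_mod_cast hden
    have hnum : mpSum d N ℓ u (t+1) (r % 2^t) ≤ mpSum d N ℓ u t r := by
      rw [hsplit t r]; omega
    constructor
    · exact div_nonneg (by positivity) hdenR.le
    · rw [hρdef]
      exact div_le_one_of_le₀ (by exact_mod_cast hnum) hdenR.le
  have hρdev : ∀ t, t < d → ∀ r, |ρ t r - 1/2| ≤ (2^(2*d-3) * 2^(ℓ*(d-1)) / N) * 2^ℓ := by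
    intro t ht r
    have hb0 := hmpb (t+1) (r % 2^t) (by omega)
    have hb1 := hmpb (t+1) (r % 2^t + 2^t) (by omega)
    have hs := hsplit t r
    have hden := hmppos t r ht.le
    -- real casts
    have hc1 : (1:ℝ) ≤ (2^(d-(t+1)) : ℕ) := by exact_mod_cast Nat.one_le_two_pow
    have hM0l : ((q * 2^(d-(t+1)) : ℕ) : ℝ) ≤ (mpSum d N ℓ u (t+1) (r % 2^t) : ℝ) := by
      exact_mod_cast hb0.1
    have hM0u : (mpSum d N ℓ u (t+1) (r % 2^t) : ℝ) ≤ (((q+1) * 2^(d-(t+1)) : ℕ) : ℝ) := by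
      exact_mod_cast hb0.2
    have hM1l : ((q * 2^(d-(t+1)) : ℕ) : ℝ) ≤ (mpSum d N ℓ u (t+1) (r % 2^t + 2^t) : ℝ) := by
      exact_mod_cast hb1.1
    have hM1u : (mpSum d N ℓ u (t+1) (r % 2^t + 2^t) : ℝ) ≤ (((q+1) * 2^(d-(t+1)) : ℕ) : ℝ) := by
      exact_mod_cast hb1.2
    set x0 : ℝ := (mpSum d N ℓ u (t+1) (r % 2^t) : ℝ) with hx0
    set x1 : ℝ := (mpSum d N ℓ u (t+1) (r % 2^t + 2^t) : ℝ) with hx1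
    have hsR : (mpSum d N ℓ u t r : ℝ) = x0 + x1 := by
      rw [hx0, hx1, hs]; push_cast; ring
    have hcq : ((q * 2^(d-(t+1)) : ℕ) : ℝ) = (q:ℝ) * (2^(d-(t+1)) : ℕ) := by push_cast; ring
    have hcq1 : (((q+1) * 2^(d-(t+1)) : ℕ) : ℝ) = ((q:ℝ)+1) * (2^(d-(t+1)) : ℕ) := by
      push_cast; ring
    rw [hcq] at hM0l hM1l
    rw [hcq1] at hM0u hM1u
    set c : ℝ := ((2^(d-(t+1)) : ℕ) : ℝ) with hc
    have hsum0 : (0:ℝ) < x0 + x1 := by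
      rw [← hsR]
      exact_mod_cast hden
    have key : |ρ t r - 1/2| ≤ 1/(4*(q:ℝ)) := by
      have e : ρ t r - 1/2 = (x0 - x1)/(2*(x0+x1)) := by
        rw [hρdef]
        simp only
        rw [hsR, ← hx0]
        field_simp
        ring
      rw [e, abs_div, abs_of_pos (by linarith : (0:ℝ) < 2*(x0+x1)),
        div_le_div_iff₀ (by linarith) (by positivity : (0:ℝ) < 4*(q:ℝ))]
      have hqc : ((q:ℝ)+1)*c - (q:ℝ)*c = c := by ring
      have habs : |x0 - x1| ≤ c := by
        rw [abs_le]
        constructor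
        · linarith
        · linarith
      have h41 : |x0 - x1| * (4*(q:ℝ)) ≤ c * (4*(q:ℝ)) :=
        mul_le_mul_of_nonneg_right habs (by positivity)
      have hr : c*(4*(q:ℝ)) = 2*((q:ℝ)*c) + 2*((q:ℝ)*c) := by ring
      linarith [h41, hM0l, hM1l]
    have h2 : 1/(4*(q:ℝ)) ≤ (2^(2*d-3) * 2^(ℓ*(d-1)) / N) * 2^ℓ := by
      have hqBNR : (N:ℝ) ≤ (q:ℝ) * ((2^d : ℕ):ℝ)^(ℓ+1) * 2^(d-1) := by
        exact_mod_cast hqBN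
      have hkey2 : (4:ℝ) * (2^(2*d-3) * 2^(ℓ*(d-1)) * 2^ℓ) = ((2^d : ℕ):ℝ)^(ℓ+1) * 2^(d-1) := by
        have hexp : d*(ℓ+1) + (d-1) = 2 + (2*d-3) + (ℓ*(d-1) + ℓ) := by
          have hdm : d*(ℓ+1) = ℓ*d + d := by ring
          omega
        push_cast
        rw [← pow_mul, ← pow_add (2:ℝ) (d*(ℓ+1)) (d-1), hexp, pow_add, pow_add, pow_add]
        first
          | (norm_num; ring)
          | norm_num
          | ring
      rw [div_mul_eq_mul_div, div_le_div_iff₀ (by positivity : (0:ℝ) < 4*(q:ℝ)) hNR, one_mul]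
      calc (N:ℝ) ≤ (q:ℝ) * ((2^d : ℕ):ℝ)^(ℓ+1) * 2^(d-1) := hqBNR
      _ = 2^(2*d-3) * 2^(ℓ*(d-1)) * 2^ℓ * (4*(q:ℝ)) := by
          rw [mul_assoc, ← hkey2]; ring
    linarith [key, h2]
  -- ## bit lemmas for mpSum
  have hbitf : ∀ t r, Nat.testBit r t = false →
      mpSum d N ℓ u (t+1) r = mpSum d N ℓ u (t+1) (r % 2^t) := by
    intro t r hbit
    apply hcongr
    have h1 : r % 2^(t+1) = r % 2^t + 2^t * (r/2^t % 2) := Nat.mod_pow_succ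
    have h2 : r/2^t % 2 = 0 := by
      have h3 := Nat.testBit_eq_decide_div_mod_eq (x := r) (i := t)
      rw [hbit] at h3
      have h4 : r/2^t % 2 < 2 := Nat.mod_lt _ (by norm_num)
      have h3' : (decide (r / 2 ^ t % 2 = 1) : Bool) = false := h3.symm
      rw [decide_eq_false_iff_not] at h3'
      omega
    have h5 : r % 2^t < 2^t := Nat.mod_lt _ (by positivity)
    have hp2 : (2:ℕ)^(t+1) = 2^t + 2^t := by rw [pow_succ]; ring
    have h6 : (r % 2^t) % 2^(t+1) = r % 2^t := Nat.mod_eq_of_lt (by omega)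
    rw [h1, h2, h6]
    simp
  have hbitt : ∀ t r, Nat.testBit r t = true →
      mpSum d N ℓ u (t+1) r = mpSum d N ℓ u (t+1) (r % 2^t + 2^t) := by
    intro t r hbit
    apply hcongr
    have h1 : r % 2^(t+1) = r % 2^t + 2^t * (r/2^t % 2) := Nat.mod_pow_succ
    have h2 : r/2^t % 2 = 1 := by
      have h3 := Nat.testBit_eq_decide_div_mod_eq (x := r) (i := t)
      rw [hbit] at h3
      have h3' : (decide (r / 2 ^ t % 2 = 1) : Bool) = true := h3.symm
      rw [decide_eq_true_eq] at h3'
      omega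
    have h5 : r % 2^t < 2^t := Nat.mod_lt _ (by positivity)
    have hp2 : (2:ℕ)^(t+1) = 2^t + 2^t := by rw [pow_succ]; ring
    have h6 : (r % 2^t + 2^t) % 2^(t+1) = r % 2^t + 2^t := Nat.mod_eq_of_lt (by omega)
    rw [h1, h2, h6]
    simp
  -- ## the subrectangles
  set Af : Fin (2^d) → Fin d → ℝ := fun v j =>
    a j + (b j - a j) * (if Nat.testBit v.val j.val then ρ j.val v.val else 0) with hAf
  set Bf : Fin (2^d) → Fin d → ℝ := fun v j =>
    a j + (b j - a j) * (if Nat.testBit v.val j.val then 1 else ρ j.val v.val) with hBf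
  have hlen : ∀ (v : Fin (2^d)) (j : Fin d), Bf v j - Af v j
      = (b j - a j) * ((mpSum d N ℓ u (j.val+1) v.val : ℝ) / (mpSum d N ℓ u j.val v.val : ℝ)) := by
    intro v j
    have hdenR : (0:ℝ) < (mpSum d N ℓ u j.val v.val : ℝ) := by
      exact_mod_cast hmppos j.val v.val j.isLt.le
    rw [hAf, hBf]
    simp only
    cases hbit : Nat.testBit v.val j.val
    · simp only [Bool.false_eq_true, if_false]
      rw [hbitf j.val v.val hbit, hρdef]
      ring
    · simp only [if_true]
      rw [hbitt j.val v.val hbit, hρdef]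
      simp only
      have hsR : (mpSum d N ℓ u (j.val+1) (v.val % 2^j.val + 2^j.val) : ℝ)
          = (mpSum d N ℓ u j.val v.val : ℝ)
            - (mpSum d N ℓ u (j.val+1) (v.val % 2^j.val) : ℝ) := by
        rw [hsplit j.val v.val]
        push_cast
        ring
      rw [hsR]
      field_simp
      ring
  have hlen0 : ∀ (v : Fin (2^d)) (j : Fin d), 0 ≤ Bf v j - Af v j := by
    intro v j
    rw [hlen v j]
    have hdenR : (0:ℝ) < (mpSum d N ℓ u j.val v.val : ℝ) := by
      exact_mod_cast hmppos j.val v.val j.isLt.le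
    have := hβpos j
    positivity
  have hAale : ∀ (v : Fin (2^d)) (j : Fin d), a j ≤ Af v j ∧ Bf v j ≤ b j := by
    intro v j
    have h01 := hρ01 j.val j.isLt v.val
    have hβ := hβpos j
    rw [hAf, hBf]
    simp only
    constructor
    · have h1 : 0 ≤ (b j - a j) * (if Nat.testBit v.val j.val then ρ j.val v.val else 0) := by
        apply mul_nonneg hβ.le
        split
        · exact h01.1
        · exact le_refl 0
      linarith
    · have h2 : (b j - a j) * (if Nat.testBit v.val j.val then 1 else ρ j.val v.val)
          ≤ (b j - a j) * 1 := by
        apply mul_le_mul_of_nonneg_left ?_ hβ.le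
        split
        · exact le_refl 1
        · exact h01.2
      linarith
  -- ## the union is exactly the rectangle
  have hUnion : (⋃ v, rect d (Af v) (Bf v)) = rect d a b := by
    apply Set.Subset.antisymm
    · intro x hx
      obtain ⟨v, hxv⟩ := Set.mem_iUnion.1 hx
      intro j
      have h := hxv j
      have h2 := hAale v j
      exact ⟨le_trans h2.1 h.1, lt_of_lt_of_le h.2 h2.2⟩
    · intro x hx
      -- greedy digit selection
      set f : ℕ → ℕ := fun n => Nat.rec 0 (fun t vt => if h : t < d then
        (if x ⟨t, h⟩ < a ⟨t, h⟩ + (b ⟨t, h⟩ - a ⟨t, h⟩) * ρ t vt then vt else vt + 2^t)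
        else vt) n with hfdef
      have hfs : ∀ t, f (t+1) = if h : t < d then
          (if x ⟨t, h⟩ < a ⟨t, h⟩ + (b ⟨t, h⟩ - a ⟨t, h⟩) * ρ t (f t) then f t else f t + 2^t)
          else f t := fun t => rfl
      have hflt : ∀ t, f t < 2^t := by
        intro t
        induction t with
        | zero => simp [hfdef]
        | succ t ih =>
            have hp2 : (2:ℕ)^(t+1) = 2^t + 2^t := by rw [pow_succ]; ring
            rw [hfs t]
            split
            · split
              · omega
              · omega
            · omega
      have hfmod : ∀ s t, t ≤ s → f s % 2^t = f t % 2^t := by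
        intro s
        induction s with
        | zero =>
            intro t ht
            have : t = 0 := by omega
            rw [this]
        | succ s ih =>
            intro t ht
            rcases Nat.eq_or_lt_of_le ht with hts | hts
            · rw [hts]
            · have hts' : t ≤ s := by omega
              rw [hfs s]
              split
              · split
                · exact ih t hts'
                · have hpe : (2:ℕ)^s = 2^t * 2^(s-t) := by
                    rw [← pow_add]; congr 1; omega
                  rw [hpe, Nat.add_mul_mod_self_left]
                  exact ih t hts'
              · exact ih t hts'
      have hfm : ∀ t, t ≤ d → f d % 2^t = f t :=
        fun t ht => (hfmod d t ht).trans (Nat.mod_eq_of_lt (hflt t))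
      refine Set.mem_iUnion.2 ⟨⟨f d, hflt d⟩, ?_⟩
      intro j
      have htd : j.val < d := j.isLt
      have hmodj : f d % 2^j.val = f j.val := hfm j.val htd.le
      have hmodj1 : f d % 2^(j.val+1) = f (j.val+1) := hfm _ (by omega)
      have hρeq : ρ j.val (f d) = ρ j.val (f j.val) := by
        rw [hρdef]
        simp only
        rw [hmodj, hcongr j.val (f d) (f j.val) (by rw [hmodj, Nat.mod_eq_of_lt (hflt j.val)]),
          Nat.mod_eq_of_lt (hflt j.val)]
      have hbitval : Nat.testBit (f d) j.val = Nat.testBit (f (j.val+1)) j.val := by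
        have h1 := Nat.testBit_mod_two_pow (f d) (j.val+1) j.val
        rw [hmodj1] at h1
        rw [h1]
        simp
      have hjeta : (⟨j.val, htd⟩ : Fin d) = j := rfl
      have hxj := hx j
      by_cases hcase : x j < a j + (b j - a j) * ρ j.val (f j.val)
      · have hfj1 : f (j.val+1) = f j.val := by
          rw [hfs j.val, dif_pos htd]
          rw [if_pos (by rw [hjeta]; exact hcase)]
        have hbv : Nat.testBit (f d) j.val = false := by
          rw [hbitval, hfj1]
          exact Nat.testBit_lt_two_pow (hflt j.val)
        rw [hAf, hBf]
        refine ⟨?_, ?_⟩ <;> simp only [hbv, Bool.false_eq_true, if_false]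
        · simpa using hxj.1
        · rw [hρeq]
          simpa using hcase
      · have hfj1 : f (j.val+1) = f j.val + 2^j.val := by
          rw [hfs j.val, dif_pos htd]
          rw [if_neg (by rw [hjeta]; exact hcase)]
        have hbv : Nat.testBit (f d) j.val = true := by
          rw [hbitval, hfj1, Nat.testBit_eq_decide_div_mod_eq]
          have h7 : (f j.val + 2^j.val)/2^j.val = 1 := by
            rw [Nat.add_div_right _ (by positivity : 0 < (2:ℕ)^j.val),
              Nat.div_eq_of_lt (hflt j.val)]
          rw [h7]
          norm_num
        rw [hAf, hBf]
        push_neg at hcase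
        refine ⟨?_, ?_⟩ <;> simp only [hbv, if_true]
        · rw [hρeq]
          simpa using hcase
        · have : a j + (b j - a j) * 1 = b j := by ring
          simpa [this] using hxj.2
  have hβprod : (∏ j, (b j - a j)) = (prefixCount d N ℓ u : ℝ)/N := by
    have h1 := hvol
    rw [volume_rect] at h1
    rw [← ENNReal.ofReal_prod_of_nonneg (fun j _ => (hβpos j).le)] at h1
    rw [show ((prefixCount d N ℓ u : ℝ≥0∞))/N
        = ENNReal.ofReal ((prefixCount d N ℓ u : ℝ)/N) from by
      rw [ENNReal.ofReal_div_of_pos hNR, ENNReal.ofReal_natCast, ENNReal.ofReal_natCast]] at h1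
    exact (ENNReal.ofReal_eq_ofReal_iff (Finset.prod_nonneg (fun j _ => (hβpos j).le))
      (by positivity)).1 h1
  refine ⟨Af, Bf, ?_, ?_, ?_, ?_, ?_⟩
  -- ### (i) pairwise disjoint
  · have hkeydisj : ∀ (v w : Fin (2^d)) (t0 : ℕ) (ht0d : t0 < d),
        Nat.testBit v.val t0 = false → Nat.testBit w.val t0 = true →
        ρ t0 v.val = ρ t0 w.val →
        Disjoint (rect d (Af v) (Bf v)) (rect d (Af w) (Bf w)) := by
      intro v w t0 ht0d hbv hbw hre
      rw [Set.disjoint_left]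
      intro x hxv hxw
      have h1 := hxv (⟨t0, ht0d⟩ : Fin d)
      have h2 := hxw (⟨t0, ht0d⟩ : Fin d)
      rw [hAf, hBf] at h1 h2
      simp only [hbv, hbw, Bool.false_eq_true, if_false, if_true] at h1 h2
      rw [hre] at h1
      exact absurd h1.2 (not_lt.2 h2.1)
    intro v w hvw
    have hex : ∃ t, Nat.testBit v.val t ≠ Nat.testBit w.val t := by
      by_contra hcon
      push_neg at hcon
      exact hvw (Fin.val_injective (Nat.eq_of_testBit_eq hcon))
    have hspec := Nat.find_spec hex
    set t0 := Nat.find hex with ht0def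
    have hmin : ∀ t < t0, Nat.testBit v.val t = Nat.testBit w.val t := by
      intro t ht
      by_contra hc
      exact Nat.find_min hex ht hc
    have ht0d : t0 < d := by
      by_contra hcon
      push_neg at hcon
      have h1 : Nat.testBit v.val t0 = false :=
        Nat.testBit_lt_two_pow (lt_of_lt_of_le v.isLt (Nat.pow_le_pow_right (by norm_num) hcon))
      have h2 : Nat.testBit w.val t0 = false :=
        Nat.testBit_lt_two_pow (lt_of_lt_of_le w.isLt (Nat.pow_le_pow_right (by norm_num) hcon))
      exact hspec (h1.trans h2.symm)
    have hmod : v.val % 2^t0 = w.val % 2^t0 := by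
      apply Nat.eq_of_testBit_eq
      intro i
      rw [Nat.testBit_mod_two_pow, Nat.testBit_mod_two_pow]
      by_cases hi : i < t0
      · simp [hi, hmin i hi]
      · simp [hi]
    have hρe : ρ t0 v.val = ρ t0 w.val := by
      rw [hρdef]
      simp only
      rw [hmod, hcongr t0 v.val w.val hmod]
    cases hbv : Nat.testBit v.val t0 <;> cases hbw : Nat.testBit w.val t0
    · exact absurd (hbv.trans hbw.symm) hspec
    · exact hkeydisj v w t0 ht0d hbv hbw hρe
    · exact (hkeydisj w v t0 ht0d hbw hbv hρe.symm).symm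
    · exact absurd (hbv.trans hbw.symm) hspec
  -- ### (ii) covers
  · rw [hUnion, Set.diff_self]
    exact measure_empty
  -- ### (iii) covered
  · rw [hUnion, Set.diff_self]
    exact measure_empty
  -- ### (iv) volumes
  · intro v
    rw [volume_rect, ← ENNReal.ofReal_prod_of_nonneg (fun j _ => hlen0 v j)]
    have hprod : (∏ j, (Bf v j - Af v j))
        = ((prefixCount d N (ℓ+1) (extendWord ℓ u v.val) : ℝ))/N := by
      have htel : ∏ t ∈ Finset.range d,
          ((mpSum d N ℓ u (t+1) v.val : ℝ) / (mpSum d N ℓ u t v.val : ℝ))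
          = (mpSum d N ℓ u d v.val : ℝ) / (mpSum d N ℓ u 0 v.val : ℝ) := by
        apply prod_div_telescope (fun t => (mpSum d N ℓ u t v.val : ℝ)) d
        intro i hi
        have := hmppos i v.val hi
        positivity
      calc (∏ j, (Bf v j - Af v j))
          = ∏ j : Fin d, ((b j - a j)
              * ((mpSum d N ℓ u (j.val+1) v.val : ℝ) / (mpSum d N ℓ u j.val v.val : ℝ))) :=
            Finset.prod_congr rfl (fun j _ => hlen v j)
        _ = (∏ j, (b j - a j)) * ∏ j : Fin d,
              ((mpSum d N ℓ u (j.val+1) v.val : ℝ) / (mpSum d N ℓ u j.val v.val : ℝ)) :=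
            Finset.prod_mul_distrib
        _ = (∏ j, (b j - a j)) * ((mpSum d N ℓ u d v.val : ℝ) / (mpSum d N ℓ u 0 v.val : ℝ)) := by
            rw [Fin.prod_univ_eq_prod_range
              (fun t => ((mpSum d N ℓ u (t+1) v.val : ℝ) / (mpSum d N ℓ u t v.val : ℝ))) d, htel]
        _ = ((prefixCount d N ℓ u : ℝ)/N)
              * ((prefixCount d N (ℓ+1) (extendWord ℓ u v.val) : ℝ)
                  / (prefixCount d N ℓ u : ℝ)) := by
            rw [mpSum_top d N ℓ u v.val v.isLt, hM0, hβprod]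
        _ = ((prefixCount d N (ℓ+1) (extendWord ℓ u v.val) : ℝ))/N := by
            have hM0' : (prefixCount d N ℓ u : ℝ) ≠ 0 := ne_of_gt hMR
            have hN0' : (N:ℝ) ≠ 0 := ne_of_gt hNR
            field_simp
            try ring
    rw [hprod, ENNReal.ofReal_div_of_pos hNR, ENNReal.ofReal_natCast, ENNReal.ofReal_natCast]
  -- ### (v) drift bounds
  · intro v j
    have htd : j.val < d := j.isLt
    have h01 := hρ01 j.val htd v.val
    have hdev := hρdev j.val htd v.val
    have haj := abs_le.1 (ha j)
    have hbj := abs_le.1 (hb j)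
    have hcor := cubeCorner_extend d ℓ v.val u j
    have hdSsucc : driftS d N (ℓ+1) = driftS d N ℓ + 2^(2*d-3) * 2^(ℓ*(d-1))/N := by
      unfold driftS
      rw [Finset.sum_range_succ]
    have h2half : ((2:ℝ)^ℓ)⁻¹ = 2 * ((2:ℝ)^(ℓ+1))⁻¹ := by
      rw [pow_succ]
      field_simp
    have hkeymid : |a j + (b j - a j) * ρ j.val v.val
        - (cubeCorner d ℓ u j + ((2:ℝ)^(ℓ+1))⁻¹)| ≤ driftS d N (ℓ+1) := by
      have e : a j + (b j - a j) * ρ j.val v.val - (cubeCorner d ℓ u j + ((2:ℝ)^(ℓ+1))⁻¹)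
          = (1 - ρ j.val v.val) * (a j - cubeCorner d ℓ u j)
            + ρ j.val v.val * (b j - (cubeCorner d ℓ u j + ((2:ℝ)^ℓ)⁻¹))
            + ((2:ℝ)^ℓ)⁻¹ * (ρ j.val v.val - 1/2) := by
        rw [h2half]
        ring
      rw [hdSsucc, e]
      have t1 : |(1 - ρ j.val v.val) * (a j - cubeCorner d ℓ u j)|
          ≤ (1 - ρ j.val v.val) * driftS d N ℓ := by
        rw [abs_mul, abs_of_nonneg (by linarith [h01.2] : (0:ℝ) ≤ 1 - ρ j.val v.val)]
        exact mul_le_mul_of_nonneg_left (ha j) (by linarith [h01.2])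
      have t2 : |ρ j.val v.val * (b j - (cubeCorner d ℓ u j + ((2:ℝ)^ℓ)⁻¹))|
          ≤ ρ j.val v.val * driftS d N ℓ := by
        rw [abs_mul, abs_of_nonneg h01.1]
        exact mul_le_mul_of_nonneg_left (hb j) h01.1
      have t3 : |((2:ℝ)^ℓ)⁻¹ * (ρ j.val v.val - 1/2)|
          ≤ 2^(2*d-3) * 2^(ℓ*(d-1))/N := by
        rw [abs_mul, abs_of_nonneg h2ℓpos.le]
        calc ((2:ℝ)^ℓ)⁻¹ * |ρ j.val v.val - 1/2|
            ≤ ((2:ℝ)^ℓ)⁻¹ * (2^(2*d-3) * 2^(ℓ*(d-1))/N * 2^ℓ) :=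
              mul_le_mul_of_nonneg_left hdev h2ℓpos.le
          _ = 2^(2*d-3) * 2^(ℓ*(d-1))/N := by
              field_simp
      calc |(1 - ρ j.val v.val) * (a j - cubeCorner d ℓ u j)
            + ρ j.val v.val * (b j - (cubeCorner d ℓ u j + ((2:ℝ)^ℓ)⁻¹))
            + ((2:ℝ)^ℓ)⁻¹ * (ρ j.val v.val - 1/2)|
          ≤ |(1 - ρ j.val v.val) * (a j - cubeCorner d ℓ u j)
            + ρ j.val v.val * (b j - (cubeCorner d ℓ u j + ((2:ℝ)^ℓ)⁻¹))|
            + |((2:ℝ)^ℓ)⁻¹ * (ρ j.val v.val - 1/2)| := abs_add_le _ _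
        _ ≤ |(1 - ρ j.val v.val) * (a j - cubeCorner d ℓ u j)|
            + |ρ j.val v.val * (b j - (cubeCorner d ℓ u j + ((2:ℝ)^ℓ)⁻¹))|
            + |((2:ℝ)^ℓ)⁻¹ * (ρ j.val v.val - 1/2)| := by
              linarith [abs_add_le ((1 - ρ j.val v.val) * (a j - cubeCorner d ℓ u j))
                (ρ j.val v.val * (b j - (cubeCorner d ℓ u j + ((2:ℝ)^ℓ)⁻¹)))]
        _ ≤ driftS d N ℓ + 2^(2*d-3) * 2^(ℓ*(d-1))/N := by
              have hsum : (1 - ρ j.val v.val) * driftS d N ℓ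
                  + ρ j.val v.val * driftS d N ℓ = driftS d N ℓ := by ring
              linarith [t1, t2, t3]
    rw [hAf, hBf, hcor]
    simp only
    have hdS1 : driftS d N ℓ ≤ driftS d N (ℓ+1) := by
      rw [hdSsucc]
      linarith [hΔ0]
    cases hbit : Nat.testBit v.val j.val
    · simp only [Bool.false_eq_true, if_false, Bool.toNat_false, Nat.cast_zero, zero_mul,
        add_zero, mul_zero]
      constructor
      · exact (ha j).trans hdS1
      · simpa using hkeymid
    · simp only [if_true, Bool.toNat_true, Nat.cast_one, one_mul]
      constructor
      · simpa using hkeymid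
      · have hbeq : a j + (b j - a j) * 1 = b j := by ring
        have h2h : ((2:ℝ)^(ℓ+1))⁻¹ + ((2:ℝ)^(ℓ+1))⁻¹ = ((2:ℝ)^ℓ)⁻¹ := by
          rw [h2half]
          ring
        calc |a j + (b j - a j) * 1
              - (cubeCorner d ℓ u j + ((2:ℝ)^(ℓ+1))⁻¹ + ((2:ℝ)^(ℓ+1))⁻¹)|
            = |b j - (cubeCorner d ℓ u j + ((2:ℝ)^ℓ)⁻¹)| := by
              rw [← h2h, hbeq]
              ring_nf
          _ ≤ driftS d N ℓ := hb j
          _ ≤ driftS d N (ℓ+1) := hdS1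
end

section
/- For every d ≥ 1 there exists a constant c_d > 0 such that for every N ∈ ℕ and every Borel probability measure σ on Q = [0,1]^d whose support consists of at most N points, every coupling π of σ and Lebesgue measure λ_d on Q satisfies ∫_{Q×Q} |x − y| dπ(x,y) ≥ c_d · N^{−1/d}; equivalently W_1(σ, λ_d) ≥ c_d N^{−1/d}, and hence W_p(σ, λ_d) ≥ c_d N^{−1/d} for every 1 ≤ p ≤ ∞ since W_1 ≤ W_p. In particular, the exponent 1/d in the uniform prefix rate is optimal. -/
open MeasureTheory
open scoped ENNReal

/-- The cube `Q = [0,1]^d`. -/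
def unitCube (d : ℕ) : Set (EuclideanSpace ℝ (Fin d)) :=
  {x | ∀ j, x j ∈ Set.Icc (0:ℝ) 1}

/-- Lebesgue measure restricted to the cube `Q = [0,1]^d` (a probability measure). -/
noncomputable def cubeLebesgue (d : ℕ) : Measure (EuclideanSpace ℝ (Fin d)) :=
  volume.restrict (unitCube d)

theorem stmt_15 (d : ℕ) (hd : 1 ≤ d) :
    ∃ c : ℝ, 0 < c ∧
      ∀ N : ℕ, 1 ≤ N →
        ∀ σ : Measure (EuclideanSpace ℝ (Fin d)),
          IsProbabilityMeasure σ →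
          σ (unitCube d)ᶜ = 0 →
          (∃ s : Finset (EuclideanSpace ℝ (Fin d)), s.card ≤ N ∧ σ (↑s : Set _)ᶜ = 0) →
          ∀ π : Measure (EuclideanSpace ℝ (Fin d) × EuclideanSpace ℝ (Fin d)),
            IsProbabilityMeasure π →
            π.map Prod.fst = σ →
            π.map Prod.snd = cubeLebesgue d →
            ENNReal.ofReal (c * (N : ℝ) ^ (-(1 : ℝ) / d)) ≤
              ∫⁻ q, ENNReal.ofReal (dist q.1 q.2) ∂π := by
  classical
  haveI : Nonempty (Fin d) := ⟨⟨0, hd⟩⟩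
  haveI : Nontrivial (EuclideanSpace ℝ (Fin d)) := inferInstance
  set B : ℝ := (volume (Metric.ball (0 : EuclideanSpace ℝ (Fin d)) 1)).toReal with hBdef
  have hBfin : volume (Metric.ball (0 : EuclideanSpace ℝ (Fin d)) 1) ≠ ⊤ :=
    (measure_ball_lt_top).ne
  have hBpos : 0 < B :=
    ENNReal.toReal_pos (Metric.measure_ball_pos volume 0 one_pos).ne' hBfin
  have hBvol : volume (Metric.ball (0 : EuclideanSpace ℝ (Fin d)) 1) = ENNReal.ofReal B :=
    (ENNReal.ofReal_toReal hBfin).symm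
  have hdR : (0:ℝ) < d := by exact_mod_cast hd
  refine ⟨2⁻¹ * (2 * B) ^ (-(1:ℝ)/d), by positivity, ?_⟩
  intro N hN σ hσ hσQ hsupp π hπ hfst hsnd
  obtain ⟨s, hscard, hσs⟩ := hsupp
  have hNR : (0:ℝ) < N := by exact_mod_cast hN
  set r : ℝ := (2 * B * N) ^ (-(1:ℝ)/d) with hrdef
  have hrpos : 0 < r := by positivity
  -- r ^ d = (2 B N)⁻¹
  have hrd : r ^ d = (2 * B * N)⁻¹ := by
    rw [hrdef, ← Real.rpow_natCast ((2 * B * N) ^ (-(1:ℝ)/d)) d,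
      ← Real.rpow_mul (by positivity)]
    rw [show (-(1:ℝ)/d) * d = -1 by field_simp]
    rw [Real.rpow_neg_one]
  -- the union of balls around support points
  set U : Set (EuclideanSpace ℝ (Fin d)) := ⋃ p ∈ s, Metric.ball p r with hUdef
  have hUopen : IsOpen U := isOpen_biUnion fun p _ => Metric.isOpen_ball
  have hUvol : volume U ≤ ENNReal.ofReal 2⁻¹ := by
    calc volume U ≤ ∑ p ∈ s, volume (Metric.ball p r) := measure_biUnion_finset_le s _
      _ = ∑ _p ∈ s, (ENNReal.ofReal (r ^ d) * ENNReal.ofReal B) := by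
          refine Finset.sum_congr rfl fun p _ => ?_
          rw [Measure.addHaar_ball (volume : Measure (EuclideanSpace ℝ (Fin d))) p hrpos.le,
            hBvol, finrank_euclideanSpace, Fintype.card_fin]
      _ = s.card * (ENNReal.ofReal (r ^ d) * ENNReal.ofReal B) := by
          rw [Finset.sum_const, nsmul_eq_mul]
      _ ≤ N * (ENNReal.ofReal (r ^ d) * ENNReal.ofReal B) := by
          gcongr
      _ = ENNReal.ofReal (N * (r ^ d * B)) := by
          rw [ENNReal.ofReal_mul (by positivity), ENNReal.ofReal_mul (by positivity),
            ENNReal.ofReal_natCast]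
      _ = ENNReal.ofReal 2⁻¹ := by
          congr 1
          rw [hrd]
          field_simp
  -- the bad set where dist < r
  have hdistCont : Continuous
      (fun q : EuclideanSpace ℝ (Fin d) × EuclideanSpace ℝ (Fin d) => dist q.1 q.2) :=
    continuous_dist
  have hltMeas : MeasurableSet {q : EuclideanSpace ℝ (Fin d) × EuclideanSpace ℝ (Fin d) |
      dist q.1 q.2 < r} := (isOpen_lt hdistCont continuous_const).measurableSet
  -- π of the preimage of sᶜ under fst is 0
  have hsMeas : MeasurableSet ((s : Set (EuclideanSpace ℝ (Fin d)))) := s.measurableSet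
  have hfst0 : π (Prod.fst ⁻¹' ((s : Set (EuclideanSpace ℝ (Fin d))))ᶜ) = 0 := by
    rw [← Measure.map_apply measurable_fst hsMeas.compl, hfst]
    exact hσs
  have hsnd' : π (Prod.snd ⁻¹' U) ≤ ENNReal.ofReal 2⁻¹ := by
    rw [← Measure.map_apply measurable_snd hUopen.measurableSet, hsnd]
    calc cubeLebesgue d U ≤ volume U := Measure.restrict_le_self U
      _ ≤ ENNReal.ofReal 2⁻¹ := hUvol
  -- {dist < r} ⊆ bad fst ∪ snd ∈ U
  have hsubset : {q : EuclideanSpace ℝ (Fin d) × EuclideanSpace ℝ (Fin d) | dist q.1 q.2 < r}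
      ⊆ (Prod.fst ⁻¹' ((s : Set (EuclideanSpace ℝ (Fin d))))ᶜ) ∪ (Prod.snd ⁻¹' U) := by
    intro q hq
    by_cases hq1 : q.1 ∈ (s : Set (EuclideanSpace ℝ (Fin d)))
    · right
      exact Set.mem_biUnion hq1 (by simpa [Metric.mem_ball, dist_comm] using hq)
    · left; exact hq1
  have hlt : π {q : EuclideanSpace ℝ (Fin d) × EuclideanSpace ℝ (Fin d) | dist q.1 q.2 < r}
      ≤ ENNReal.ofReal 2⁻¹ := by
    calc π _ ≤ π ((Prod.fst ⁻¹' ((s : Set (EuclideanSpace ℝ (Fin d))))ᶜ) ∪ (Prod.snd ⁻¹' U)) :=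
          measure_mono hsubset
      _ ≤ π (Prod.fst ⁻¹' ((s : Set (EuclideanSpace ℝ (Fin d))))ᶜ) + π (Prod.snd ⁻¹' U) :=
          measure_union_le _ _
      _ ≤ ENNReal.ofReal 2⁻¹ := by rw [hfst0, zero_add]; exact hsnd'
  -- hence π {r ≤ dist} ≥ 1/2
  have hofHalf : ENNReal.ofReal (2⁻¹ : ℝ) = 2⁻¹ := by
    rw [ENNReal.ofReal_inv_of_pos two_pos, ENNReal.ofReal_ofNat]
  have hge : (2⁻¹ : ℝ≥0∞) ≤ π {q : EuclideanSpace ℝ (Fin d) × EuclideanSpace ℝ (Fin d) |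
      r ≤ dist q.1 q.2} := by
    have hc : {q : EuclideanSpace ℝ (Fin d) × EuclideanSpace ℝ (Fin d) | r ≤ dist q.1 q.2}
        = {q : EuclideanSpace ℝ (Fin d) × EuclideanSpace ℝ (Fin d) | dist q.1 q.2 < r}ᶜ := by
      ext q; simp [not_lt]
    rw [hc, measure_compl hltMeas (measure_ne_top π _), measure_univ]
    rw [hofHalf] at hlt
    calc (2⁻¹ : ℝ≥0∞) = 1 - 2⁻¹ := by norm_num
      _ ≤ 1 - π {q | dist q.1 q.2 < r} := by
          exact tsub_le_tsub_left hlt 1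
  -- Markov
  have hmarkov : ENNReal.ofReal r *
      π {q : EuclideanSpace ℝ (Fin d) × EuclideanSpace ℝ (Fin d) | r ≤ dist q.1 q.2}
      ≤ ∫⁻ q, ENNReal.ofReal (dist q.1 q.2) ∂π := by
    have h1 : {q : EuclideanSpace ℝ (Fin d) × EuclideanSpace ℝ (Fin d) | r ≤ dist q.1 q.2}
        ⊆ {q | ENNReal.ofReal r ≤ ENNReal.ofReal (dist q.1 q.2)} := by
      intro q hq; exact ENNReal.ofReal_le_ofReal hq
    calc ENNReal.ofReal r * π {q | r ≤ dist q.1 q.2}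
        ≤ ENNReal.ofReal r * π {q | ENNReal.ofReal r ≤ ENNReal.ofReal (dist q.1 q.2)} := by
          gcongr
      _ ≤ _ := mul_meas_ge_le_lintegral₀
          ((ENNReal.measurable_ofReal.comp hdistCont.measurable).aemeasurable) _
  -- conclude
  have hkey : ENNReal.ofReal (2⁻¹ * (2 * B) ^ (-(1:ℝ)/d) * (N : ℝ) ^ (-(1 : ℝ) / d))
      = ENNReal.ofReal r * 2⁻¹ := by
    rw [← hofHalf, ← ENNReal.ofReal_mul hrpos.le]
    congr 1
    rw [hrdef, show (2:ℝ) * B * N = (2*B) * N by ring,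
      Real.mul_rpow (by positivity) hNR.le]
    ring
  calc ENNReal.ofReal (2⁻¹ * (2 * B) ^ (-(1:ℝ)/d) * (N : ℝ) ^ (-(1 : ℝ) / d))
      = ENNReal.ofReal r * 2⁻¹ := hkey
    _ ≤ ENNReal.ofReal r * π {q : EuclideanSpace ℝ (Fin d) × EuclideanSpace ℝ (Fin d) |
        r ≤ dist q.1 q.2} := by gcongr
    _ ≤ ∫⁻ q, ENNReal.ofReal (dist q.1 q.2) ∂π := hmarkov
end
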